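/- Fix τ ∈ (0,1). Then f(y*_τ) ≤ y*_τ, and the inequality is strict if there exists δ > 0 such that pr^{(Γ(·, y*_τ), π₂*)}(Y ≤ y*_τ − δ) ≥ τ. -/
import Mathlib


open MeasureTheory ProbabilityTheory Filter Set

noncomputable section

/-- sign function: `1` if `0 ≤ x`, `−1` otherwise. -/
def sgn (x : ℝ) : ℝ := if 0 ≤ x then 1 else -1

/-- `pr^π(Y ≤ y)`, the CDF of the outcome induced by the regime `(π₁, π₂)`:
`∫∫ F_ε(y − m(h₂) − π₂(h₂) c(h₂)) κ((h₁, π₁(h₁)), dh₂) μ(dh₁)`. -/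
def prPi {X1 X2 : Type*} [MeasurableSpace X1] [MeasurableSpace X2]
    (μ : Measure X1) (κ : Kernel (X1 × ℝ) X2) (m c : X2 → ℝ) (Feps : ℝ → ℝ)
    (π₁ : X1 → ℝ) (π₂ : X2 → ℝ) (y : ℝ) : ℝ :=
  ∫ h₁, (∫ h₂, Feps (y - m h₂ - π₂ h₂ * c h₂) ∂(κ (h₁, π₁ h₁))) ∂μ

/-- `I(y, F, G) = ∫ F(y − u − |v|) dG(u,v)`. -/
def Ifun (y : ℝ) (F : ℝ → ℝ) (G : Measure (ℝ × ℝ)) : ℝ :=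
  ∫ p, F (y - p.1 - |p.2|) ∂G

/-- `G(·,· | h₁, a₁)`: the pushforward of `κ((h₁,a₁),·)` under `h₂ ↦ (m h₂, c h₂)`. -/
def Gdist {X1 X2 : Type*} [MeasurableSpace X1] [MeasurableSpace X2]
    (κ : Kernel (X1 × ℝ) X2) (m c : X2 → ℝ) (h₁ : X1) (a₁ : ℝ) : Measure (ℝ × ℝ) :=
  (κ (h₁, a₁)).map (fun h₂ => (m h₂, c h₂))

/-- `d(h₁, y) = I(y, F_ε, G(·,·|h₁,−1)) − I(y, F_ε, G(·,·|h₁,1))`. -/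
def dfun {X1 X2 : Type*} [MeasurableSpace X1] [MeasurableSpace X2]
    (κ : Kernel (X1 × ℝ) X2) (m c : X2 → ℝ) (Feps : ℝ → ℝ) (h₁ : X1) (y : ℝ) : ℝ :=
  Ifun y Feps (Gdist κ m c h₁ (-1)) - Ifun y Feps (Gdist κ m c h₁ 1)

/-- `Γ(h₁, y) = sgn(d(h₁, y))`. -/
def Gam {X1 X2 : Type*} [MeasurableSpace X1] [MeasurableSpace X2]
    (κ : Kernel (X1 × ℝ) X2) (m c : X2 → ℝ) (Feps : ℝ → ℝ) (h₁ : X1) (y : ℝ) : ℝ :=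
  sgn (dfun κ m c Feps h₁ y)

/-- `q^π(τ) = inf{y : pr^π(Y ≤ y) ≥ τ}`. -/
def quant {X1 X2 : Type*} [MeasurableSpace X1] [MeasurableSpace X2]
    (μ : Measure X1) (κ : Kernel (X1 × ℝ) X2) (m c : X2 → ℝ) (Feps : ℝ → ℝ)
    (τ : ℝ) (π₁ : X1 → ℝ) (π₂ : X2 → ℝ) : ℝ :=
  sInf {y : ℝ | τ ≤ prPi μ κ m c Feps π₁ π₂ y}

/-- `y*_τ = inf{y : pr^{(Γ(·,y), π₂*)}(Y ≤ y) ≥ τ}` where `π₂*(h₂) = sgn(c(h₂))`. -/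
def ystar {X1 X2 : Type*} [MeasurableSpace X1] [MeasurableSpace X2]
    (μ : Measure X1) (κ : Kernel (X1 × ℝ) X2) (m c : X2 → ℝ) (Feps : ℝ → ℝ)
    (τ : ℝ) : ℝ :=
  sInf {y : ℝ |
    τ ≤ prPi μ κ m c Feps (fun h₁ => Gam κ m c Feps h₁ y) (fun h₂ => sgn (c h₂)) y}

/-- `f(y) = q^{(Γ(·,y), π₂*)}(τ)`. -/
def fQIQ {X1 X2 : Type*} [MeasurableSpace X1] [MeasurableSpace X2]
    (μ : Measure X1) (κ : Kernel (X1 × ℝ) X2) (m c : X2 → ℝ) (Feps : ℝ → ℝ)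
    (τ : ℝ) (y : ℝ) : ℝ :=
  quant μ κ m c Feps τ (fun h₁ => Gam κ m c Feps h₁ y) (fun h₂ => sgn (c h₂))

lemma sgn_mul_self (x : ℝ) : sgn x * x = |x| := by
  unfold sgn
  rcases le_or_gt 0 x with h | h
  · rw [if_pos h, one_mul, abs_of_nonneg h]
  · rw [if_neg (not_le.2 h), neg_one_mul, abs_of_neg h]

lemma measurable_sgn : Measurable sgn := by
  unfold sgn
  exact Measurable.ite (measurableSet_le measurable_const measurable_id)
    measurable_const measurable_const

namespace Stmt11Aux

variable {X1 X2 : Type*} [MeasurableSpace X1] [MeasurableSpace X2]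

/-- The inner integral `∫ F_ε(y - m - |c|) dκ(h₁, a)`. -/
def J (κ : Kernel (X1 × ℝ) X2) (m c : X2 → ℝ) (Feps : ℝ → ℝ)
    (y : ℝ) (h₁ : X1) (a : ℝ) : ℝ :=
  ∫ h₂, Feps (y - m h₂ - |c h₂|) ∂(κ (h₁, a))

variable {κ : Kernel (X1 × ℝ) X2} [IsMarkovKernel κ] {m c : X2 → ℝ} {Feps : ℝ → ℝ}

lemma meas_integrand (hm : Measurable m) (hc : Measurable c) (hF_mono : Monotone Feps)
    (y : ℝ) : Measurable (fun h₂ => Feps (y - m h₂ - |c h₂|)) :=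
  hF_mono.measurable.comp (((measurable_const.sub hm).sub hc.abs))

lemma integrable_integrand (hm : Measurable m) (hc : Measurable c) (hF_mono : Monotone Feps)
    (hF_mem : ∀ x : ℝ, Feps x ∈ Icc (0:ℝ) 1) (y : ℝ) (ν : Measure X2)
    [IsProbabilityMeasure ν] :
    Integrable (fun h₂ => Feps (y - m h₂ - |c h₂|)) ν := by
  refine Integrable.mono' (integrable_const 1)
    (meas_integrand hm hc hF_mono y).aestronglyMeasurable ?_
  filter_upwards with h₂
  rw [Real.norm_eq_abs, abs_le]
  exact ⟨by linarith [(hF_mem (y - m h₂ - |c h₂|)).1], (hF_mem _).2⟩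

lemma J_mem (hm : Measurable m) (hc : Measurable c) (hF_mono : Monotone Feps)
    (hF_mem : ∀ x : ℝ, Feps x ∈ Icc (0:ℝ) 1) (y : ℝ) (h₁ : X1) (a : ℝ) :
    J κ m c Feps y h₁ a ∈ Icc (0:ℝ) 1 := by
  constructor
  · exact integral_nonneg fun h₂ => (hF_mem _).1
  · calc J κ m c Feps y h₁ a ≤ ∫ _, (1:ℝ) ∂(κ (h₁, a)) :=
          integral_mono (integrable_integrand hm hc hF_mono hF_mem y _)
            (integrable_const 1) (fun h₂ => (hF_mem _).2)
    _ = 1 := by simp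

lemma J_mono (hm : Measurable m) (hc : Measurable c) (hF_mono : Monotone Feps)
    (hF_mem : ∀ x : ℝ, Feps x ∈ Icc (0:ℝ) 1) (h₁ : X1) (a : ℝ)
    {y₁ y₂ : ℝ} (h : y₁ ≤ y₂) :
    J κ m c Feps y₁ h₁ a ≤ J κ m c Feps y₂ h₁ a :=
  integral_mono (integrable_integrand hm hc hF_mono hF_mem y₁ _)
    (integrable_integrand hm hc hF_mono hF_mem y₂ _)
    (fun h₂ => hF_mono (by linarith))

lemma measurable_J (hm : Measurable m) (hc : Measurable c) (hF_mono : Monotone Feps)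
    {π₁ : X1 → ℝ} (hπ : Measurable π₁) (y : ℝ) :
    Measurable (fun h₁ => J κ m c Feps y h₁ (π₁ h₁)) := by
  have he : Measurable (fun h₁ : X1 => (h₁, π₁ h₁)) := measurable_id.prodMk hπ
  have heq : (fun h₁ => J κ m c Feps y h₁ (π₁ h₁)) =
      fun h₁ => ∫ h₂, Feps (y - m h₂ - |c h₂|) ∂((κ.comap (fun h₁ => (h₁, π₁ h₁)) he) h₁) := by
    funext h₁; rw [Kernel.comap_apply]; rfl
  rw [heq]
  exact (MeasureTheory.StronglyMeasurable.integral_kernel_prod_right'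
    (κ := κ.comap (fun h₁ => (h₁, π₁ h₁)) he)
    (f := fun p : X1 × X2 => Feps (y - m p.2 - |c p.2|))
    ((meas_integrand hm hc hF_mono y).comp measurable_snd).stronglyMeasurable).measurable

lemma integrable_J {μ : Measure X1} [IsProbabilityMeasure μ]
    (hm : Measurable m) (hc : Measurable c) (hF_mono : Monotone Feps)
    (hF_mem : ∀ x : ℝ, Feps x ∈ Icc (0:ℝ) 1)
    {π₁ : X1 → ℝ} (hπ : Measurable π₁) (y : ℝ) :
    Integrable (fun h₁ => J κ m c Feps y h₁ (π₁ h₁)) μ := by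
  refine Integrable.mono' (integrable_const 1)
    (measurable_J hm hc hF_mono hπ y).aestronglyMeasurable ?_
  filter_upwards with h₁
  rw [Real.norm_eq_abs, abs_le]
  have := J_mem (κ := κ) hm hc hF_mono hF_mem y h₁ (π₁ h₁)
  exact ⟨by linarith [this.1], this.2⟩

lemma Ifun_eq (hm : Measurable m) (hc : Measurable c) (hF_mono : Monotone Feps)
    (y : ℝ) (h₁ : X1) (a : ℝ) :
    Ifun y Feps (Gdist κ m c h₁ a) = J κ m c Feps y h₁ a := by
  unfold Ifun Gdist J
  have hfm : Measurable (fun p : ℝ × ℝ => Feps (y - p.1 - |p.2|)) :=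
    hF_mono.measurable.comp ((measurable_const.sub measurable_fst).sub measurable_snd.abs)
  rw [integral_map (hm.prodMk hc).aemeasurable hfm.aestronglyMeasurable]

lemma J_Gam_eq (hm : Measurable m) (hc : Measurable c) (hF_mono : Monotone Feps)
    (h₁ : X1) (y : ℝ) :
    J κ m c Feps y h₁ (Gam κ m c Feps h₁ y)
      = min (J κ m c Feps y h₁ (-1)) (J κ m c Feps y h₁ 1) := by
  unfold Gam dfun sgn
  rw [Ifun_eq hm hc hF_mono, Ifun_eq hm hc hF_mono]
  split_ifs with h
  · rw [min_eq_right (by linarith)]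
  · rw [min_eq_left (by linarith)]

lemma Gam_mem (h₁ : X1) (y : ℝ) :
    Gam κ m c Feps h₁ y = 1 ∨ Gam κ m c Feps h₁ y = -1 := by
  unfold Gam sgn; split_ifs <;> simp

lemma J_Gam_le (hm : Measurable m) (hc : Measurable c) (hF_mono : Monotone Feps)
    (h₁ : X1) (y z : ℝ) :
    J κ m c Feps y h₁ (Gam κ m c Feps h₁ y) ≤ J κ m c Feps y h₁ (Gam κ m c Feps h₁ z) := by
  rw [J_Gam_eq hm hc hF_mono]
  rcases Gam_mem (κ := κ) (m := m) (c := c) (Feps := Feps) h₁ z with h | h <;> rw [h]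
  · exact min_le_right _ _
  · exact min_le_left _ _

lemma measurable_Gam (hm : Measurable m) (hc : Measurable c) (hF_mono : Monotone Feps)
    (y : ℝ) : Measurable (fun h₁ => Gam κ m c Feps h₁ y) := by
  unfold Gam dfun
  refine measurable_sgn.comp (Measurable.sub ?_ ?_)
  · simpa [Ifun_eq hm hc hF_mono] using
      measurable_J (κ := κ) hm hc hF_mono (measurable_const (a := (-1:ℝ))) y
  · simpa [Ifun_eq hm hc hF_mono] using
      measurable_J (κ := κ) hm hc hF_mono (measurable_const (a := (1:ℝ))) y

lemma prPi_eq (μ : Measure X1) (π₁ : X1 → ℝ) (y : ℝ) :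
    prPi μ κ m c Feps π₁ (fun h₂ => sgn (c h₂)) y
      = ∫ h₁, J κ m c Feps y h₁ (π₁ h₁) ∂μ := by
  unfold prPi J
  simp only [sgn_mul_self]

lemma tendsto_J_atTop (hm : Measurable m) (hc : Measurable c) (hF_mono : Monotone Feps)
    (hF_top : Tendsto Feps atTop (nhds 1))
    (hF_mem : ∀ x : ℝ, Feps x ∈ Icc (0:ℝ) 1) (h₁ : X1) (a : ℝ) :
    Tendsto (fun y => J κ m c Feps y h₁ a) atTop (nhds 1) := by
  have h1 : (1:ℝ) = ∫ _, (1:ℝ) ∂(κ (h₁, a)) := by simp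
  rw [h1]
  refine tendsto_integral_filter_of_dominated_convergence (fun _ => (1:ℝ)) ?_ ?_
    (integrable_const 1) ?_
  · filter_upwards with y
    exact (meas_integrand hm hc hF_mono y).aestronglyMeasurable
  · filter_upwards with y
    filter_upwards with h₂
    rw [Real.norm_eq_abs, abs_le]
    exact ⟨by linarith [(hF_mem (y - m h₂ - |c h₂|)).1], (hF_mem _).2⟩
  · filter_upwards with h₂
    have : Tendsto (fun y : ℝ => y - m h₂ - |c h₂|) atTop atTop := by
      simpa [sub_eq_add_neg] using
        tendsto_atTop_add_const_right atTop (-|c h₂|)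
          (tendsto_atTop_add_const_right atTop (-(m h₂)) tendsto_id)
    exact hF_top.comp this

lemma tendsto_J_atBot (hm : Measurable m) (hc : Measurable c) (hF_mono : Monotone Feps)
    (hF_bot : Tendsto Feps atBot (nhds 0))
    (hF_mem : ∀ x : ℝ, Feps x ∈ Icc (0:ℝ) 1) (h₁ : X1) (a : ℝ) :
    Tendsto (fun y => J κ m c Feps y h₁ a) atBot (nhds 0) := by
  have h0 : (0:ℝ) = ∫ _, (0:ℝ) ∂(κ (h₁, a)) := by simp
  rw [h0]
  refine tendsto_integral_filter_of_dominated_convergence (fun _ => (1:ℝ)) ?_ ?_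
    (integrable_const 1) ?_
  · filter_upwards with y
    exact (meas_integrand hm hc hF_mono y).aestronglyMeasurable
  · filter_upwards with y
    filter_upwards with h₂
    rw [Real.norm_eq_abs, abs_le]
    exact ⟨by linarith [(hF_mem (y - m h₂ - |c h₂|)).1], (hF_mem _).2⟩
  · filter_upwards with h₂
    have : Tendsto (fun y : ℝ => y - m h₂ - |c h₂|) atBot atBot := by
      simpa [sub_eq_add_neg] using
        tendsto_atBot_add_const_right atBot (-|c h₂|)
          (tendsto_atBot_add_const_right atBot (-(m h₂)) tendsto_id)
    exact hF_bot.comp this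

end Stmt11Aux

/-- fix `τ ∈ (0,1)`. Then `f(y*_τ) ≤ y*_τ`, and the inequality is strict if
there exists `δ > 0` such that `pr^{(Γ(·, y*_τ), π₂*)}(Y ≤ y*_τ − δ) ≥ τ`. -/
theorem stmt11
    {X1 X2 : Type*} [MeasurableSpace X1] [MeasurableSpace X2]
    [StandardBorelSpace X1] [StandardBorelSpace X2]
    (μ : Measure X1) [IsProbabilityMeasure μ]
    (κ : Kernel (X1 × ℝ) X2) [IsMarkovKernel κ]
    (m c : X2 → ℝ) (hm : Measurable m) (hc : Measurable c)
    (Feps : ℝ → ℝ) (hF_mono : Monotone Feps)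
    (hF_rc : ∀ x : ℝ, ContinuousWithinAt Feps (Ici x) x)
    (hF_bot : Tendsto Feps atBot (nhds 0)) (hF_top : Tendsto Feps atTop (nhds 1))
    (hF_mem : ∀ x : ℝ, Feps x ∈ Icc (0:ℝ) 1)
    (τ : ℝ) (hτ : τ ∈ Ioo (0:ℝ) 1) :
    fQIQ μ κ m c Feps τ (ystar μ κ m c Feps τ) ≤ ystar μ κ m c Feps τ ∧
    ((∃ δ > (0:ℝ),
        τ ≤ prPi μ κ m c Feps (fun h₁ => Gam κ m c Feps h₁ (ystar μ κ m c Feps τ))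
              (fun h₂ => sgn (c h₂)) (ystar μ κ m c Feps τ - δ)) →
      fQIQ μ κ m c Feps τ (ystar μ κ m c Feps τ) < ystar μ κ m c Feps τ) := by
  classical
  obtain ⟨hτ0, hτ1⟩ := hτ
  set yst := ystar μ κ m c Feps τ with hystdef
  have hGamst : Measurable (fun h₁ => Gam κ m c Feps h₁ yst) :=
    Stmt11Aux.measurable_Gam hm hc hF_mono yst
  -- the set whose infimum is `fQIQ ... yst`
  have hfQ : fQIQ μ κ m c Feps τ yst =
      sInf {y : ℝ | τ ≤ prPi μ κ m c Feps (fun h₁ => Gam κ m c Feps h₁ yst)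
        (fun h₂ => sgn (c h₂)) y} := rfl
  have hyS : yst = sInf {y : ℝ | τ ≤ prPi μ κ m c Feps (fun h₁ => Gam κ m c Feps h₁ y)
      (fun h₂ => sgn (c h₂)) y} := rfl
  -- bounded below
  have hg_bot : Tendsto (fun y => ∫ h₁, Stmt11Aux.J κ m c Feps y h₁
      (Gam κ m c Feps h₁ yst) ∂μ) atBot (nhds 0) := by
    have h0 : (0:ℝ) = ∫ _, (0:ℝ) ∂μ := by simp
    rw [h0]
    refine tendsto_integral_filter_of_dominated_convergence (fun _ => (1:ℝ)) ?_ ?_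
      (integrable_const 1) ?_
    · filter_upwards with y
      exact (Stmt11Aux.measurable_J hm hc hF_mono hGamst y).aestronglyMeasurable
    · filter_upwards with y
      filter_upwards with h₁
      have := Stmt11Aux.J_mem (κ := κ) hm hc hF_mono hF_mem y h₁ (Gam κ m c Feps h₁ yst)
      rw [Real.norm_eq_abs, abs_le]
      exact ⟨by linarith [this.1], this.2⟩
    · filter_upwards with h₁
      exact Stmt11Aux.tendsto_J_atBot hm hc hF_mono hF_bot hF_mem h₁ _
  obtain ⟨y₀, hy₀⟩ : ∃ y₀, ∫ h₁, Stmt11Aux.J κ m c Feps y₀ h₁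
      (Gam κ m c Feps h₁ yst) ∂μ < τ := (hg_bot.eventually_lt_const hτ0).exists
  have hAbdd : BddBelow {y : ℝ | τ ≤ prPi μ κ m c Feps (fun h₁ => Gam κ m c Feps h₁ yst)
      (fun h₂ => sgn (c h₂)) y} := by
    refine ⟨y₀, fun y hy => ?_⟩
    by_contra hlt
    push_neg at hlt
    have h1 : τ ≤ ∫ h₁, Stmt11Aux.J κ m c Feps y h₁ (Gam κ m c Feps h₁ yst) ∂μ := by
      rw [← Stmt11Aux.prPi_eq]; exact hy
    have h2 : ∫ h₁, Stmt11Aux.J κ m c Feps y h₁ (Gam κ m c Feps h₁ yst) ∂μ ≤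
        ∫ h₁, Stmt11Aux.J κ m c Feps y₀ h₁ (Gam κ m c Feps h₁ yst) ∂μ :=
      integral_mono (Stmt11Aux.integrable_J hm hc hF_mono hF_mem hGamst y)
        (Stmt11Aux.integrable_J hm hc hF_mono hF_mem hGamst y₀)
        (fun h₁ => Stmt11Aux.J_mono hm hc hF_mono hF_mem h₁ _ hlt.le)
    linarith
  -- the set defining yst is nonempty
  have hmin_top : Tendsto (fun y => ∫ h₁, min (Stmt11Aux.J κ m c Feps y h₁ (-1))
      (Stmt11Aux.J κ m c Feps y h₁ 1) ∂μ) atTop (nhds 1) := by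
    have H : Tendsto (fun y => ∫ h₁, min (Stmt11Aux.J κ m c Feps y h₁ (-1))
        (Stmt11Aux.J κ m c Feps y h₁ 1) ∂μ) atTop (nhds (∫ _, (1:ℝ) ∂μ)) := by
      refine tendsto_integral_filter_of_dominated_convergence (fun _ => (1:ℝ)) ?_ ?_
        (integrable_const 1) ?_
      · filter_upwards with y
        exact ((Stmt11Aux.measurable_J (κ := κ) hm hc hF_mono measurable_const y).min
          (Stmt11Aux.measurable_J (κ := κ) hm hc hF_mono measurable_const y)).aestronglyMeasurable
      · filter_upwards with y
        filter_upwards with h₁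
        have hL := Stmt11Aux.J_mem (κ := κ) hm hc hF_mono hF_mem y h₁ (-1)
        have hR := Stmt11Aux.J_mem (κ := κ) hm hc hF_mono hF_mem y h₁ 1
        rw [Real.norm_eq_abs, abs_le]
        constructor
        · have : (0:ℝ) ≤ min (Stmt11Aux.J κ m c Feps y h₁ (-1))
              (Stmt11Aux.J κ m c Feps y h₁ 1) := le_min hL.1 hR.1
          linarith
        · exact le_trans (min_le_left _ _) hL.2
      · filter_upwards with h₁
        have := (Stmt11Aux.tendsto_J_atTop (κ := κ) hm hc hF_mono hF_top hF_mem h₁ (-1)).min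
          (Stmt11Aux.tendsto_J_atTop (κ := κ) hm hc hF_mono hF_top hF_mem h₁ 1)
        simpa using this
    simpa using H
  obtain ⟨y₁, hy₁⟩ : ∃ y₁, τ < ∫ h₁, min (Stmt11Aux.J κ m c Feps y₁ h₁ (-1))
      (Stmt11Aux.J κ m c Feps y₁ h₁ 1) ∂μ := (hmin_top.eventually_const_lt hτ1).exists
  have hS_ne : {y : ℝ | τ ≤ prPi μ κ m c Feps (fun h₁ => Gam κ m c Feps h₁ y)
      (fun h₂ => sgn (c h₂)) y}.Nonempty := by
    refine ⟨y₁, ?_⟩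
    show τ ≤ prPi μ κ m c Feps (fun h₁ => Gam κ m c Feps h₁ y₁) (fun h₂ => sgn (c h₂)) y₁
    rw [Stmt11Aux.prPi_eq]
    have heq : ∫ h₁, Stmt11Aux.J κ m c Feps y₁ h₁ (Gam κ m c Feps h₁ y₁) ∂μ =
        ∫ h₁, min (Stmt11Aux.J κ m c Feps y₁ h₁ (-1)) (Stmt11Aux.J κ m c Feps y₁ h₁ 1) ∂μ :=
      integral_congr_ae (Filter.Eventually.of_forall
        (fun h₁ => Stmt11Aux.J_Gam_eq hm hc hF_mono h₁ y₁))
    rw [heq]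
    exact hy₁.le
  -- S ⊆ A
  have hSA : {y : ℝ | τ ≤ prPi μ κ m c Feps (fun h₁ => Gam κ m c Feps h₁ y)
        (fun h₂ => sgn (c h₂)) y} ⊆
      {y : ℝ | τ ≤ prPi μ κ m c Feps (fun h₁ => Gam κ m c Feps h₁ yst)
        (fun h₂ => sgn (c h₂)) y} := by
    intro y hy
    have h1 : τ ≤ ∫ h₁, Stmt11Aux.J κ m c Feps y h₁ (Gam κ m c Feps h₁ y) ∂μ := by
      rw [← Stmt11Aux.prPi_eq]; exact hy
    have h2 : ∫ h₁, Stmt11Aux.J κ m c Feps y h₁ (Gam κ m c Feps h₁ y) ∂μ ≤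
        ∫ h₁, Stmt11Aux.J κ m c Feps y h₁ (Gam κ m c Feps h₁ yst) ∂μ :=
      integral_mono
        (Stmt11Aux.integrable_J hm hc hF_mono hF_mem
          (Stmt11Aux.measurable_Gam hm hc hF_mono y) y)
        (Stmt11Aux.integrable_J hm hc hF_mono hF_mem hGamst y)
        (fun h₁ => Stmt11Aux.J_Gam_le hm hc hF_mono h₁ y yst)
    show τ ≤ prPi μ κ m c Feps (fun h₁ => Gam κ m c Feps h₁ yst) (fun h₂ => sgn (c h₂)) y
    rw [Stmt11Aux.prPi_eq]
    linarith
  constructor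
  · rw [hfQ]
    conv_rhs => rw [hyS]
    exact csInf_le_csInf hAbdd hS_ne hSA
  · rintro ⟨δ, hδ, hmem⟩
    have hmemA : yst - δ ∈ {y : ℝ | τ ≤ prPi μ κ m c Feps
        (fun h₁ => Gam κ m c Feps h₁ yst) (fun h₂ => sgn (c h₂)) y} := hmem
    have := csInf_le hAbdd hmemA
    rw [hfQ]
    linarith
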